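/- Let p̃⁻ = r ⋉ (m⁻)^a and let F_K^k(U(p̃⁻)*) = { f : f(U_{k−1}(p̃⁻)) = 0 } be the generalized Kostant filtration. Define ψ_k : F_K^k(U(p̃⁻)*) → S_k(p⁻)* by ψ_k(f)(s s') = f(s θ(s')) for s ∈ S_j(m⁻), s' ∈ S_{k−j}(r), 0 ≤ j ≤ k, where θ : S(r) → U(r) is symmetrization. Then ψ_k is a surjective linear map with kernel exactly F_K^{k+1}(U(p̃⁻)*); hence it induces a linear isomorphism gr_K^k(U(p̃⁻)*) = F_K^k/F_K^{k+1} ≅ S_k(p⁻)*. -/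

import Mathlib

/-!
Since `U_{n-1}` is a complement of `range incl` in `U_n`, a functional vanishing on `U_{n-1}`
vanishes on `U_n` exactly when it vanishes on `range incl`. For surjectivity, `incl` stays
injective after passing to `U ⧸ U_{n-1}`, and over a field the dual of an injective map is
surjective, so every functional on `S` lifts to one on `U ⧸ U_{n-1}`.
-/

namespace Stmt13

variable {k : Type*} [Field k] {U : Type*} [AddCommGroup U] [Module k U]

/-- The generalized Kostant filtration `F_K^n = {f ∈ U* : f(U_{n−1}) = 0}` attached to an
(increasing) filtration `Ufil` of `U` (with `U_{−1} = 0`). -/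
def FKgen (Ufil : ℕ → Submodule k U) : ℕ → Submodule k (Module.Dual k U)
  | 0 => (⊥ : Submodule k U).dualAnnihilator
  | n + 1 => (Ufil n).dualAnnihilator

section Complement

variable {R M N : Type*} [CommRing R] [AddCommGroup M] [Module R M] [AddCommGroup N] [Module R N]

theorem comp_eq_zero_iff_mem_dualAnnihilator_sup {V : Submodule R M} {f : Module.Dual R M}
    (hf : f ∈ V.dualAnnihilator) (incl : N →ₗ[R] M) :
    f ∘ₗ incl = 0 ↔ f ∈ (LinearMap.range incl ⊔ V).dualAnnihilator := by
  rw [Submodule.dualAnnihilator_sup_eq, Submodule.mem_inf, and_iff_left hf,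
    ← LinearMap.ker_dualMap_eq_dualAnnihilator_range, LinearMap.mem_ker]
  rfl

theorem injective_mkQ_comp_of_disjoint {V : Submodule R M} {incl : N →ₗ[R] M}
    (hinj : Function.Injective incl) (hdisj : Disjoint (LinearMap.range incl) V) :
    Function.Injective (V.mkQ ∘ₗ incl) := by
  rw [← LinearMap.ker_eq_bot, LinearMap.ker_comp, Submodule.ker_mkQ, Submodule.eq_bot_iff]
  intro x hx
  have hx0 : incl x = 0 :=
    (Submodule.disjoint_def.mp hdisj) (incl x) (LinearMap.mem_range_self incl x) hx
  exact hinj (hx0.trans (map_zero incl).symm)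

end Complement

theorem exists_mem_dualAnnihilator_comp_eq {S : Type*} [AddCommGroup S] [Module k S]
    {V : Submodule k U} {incl : S →ₗ[k] U} (hinj : Function.Injective incl)
    (hdisj : Disjoint (LinearMap.range incl) V) (g : Module.Dual k S) :
    ∃ f ∈ V.dualAnnihilator, f ∘ₗ incl = g := by
  obtain ⟨h, rfl⟩ :=
    LinearMap.dualMap_surjective_of_injective (injective_mkQ_comp_of_disjoint hinj hdisj) g
  exact ⟨h ∘ₗ V.mkQ, Submodule.range_dualMap_mkQ_eq V ▸ LinearMap.mem_range_self _ h, rfl⟩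

/-- Here `U = U(p̃⁻)` with its canonical filtration `Ufil`, `S` stands for
`S_k(p⁻) ≅ ⊕_{j=0}^{k} S_j(m⁻) ⊗ S_{k−j}(r)`, and `incl : S → U` is `s·s' ↦ s·θ(s')`, which by
Poincaré–Birkhoff–Witt identifies `S` with a complement of `U_{k−1}(p̃⁻)` in `U_k(p̃⁻)`
(hypotheses `hinj`, `hinf`, `hsup`); the Kostant map is `ψ_k(f) = f ∘ incl`. -/
theorem kostant_map_surjective_kernel
    {S : Type*} [AddCommGroup S] [Module k S]
    (Ufil : ℕ → Submodule k U) (n : ℕ)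
    (incl : S →ₗ[k] U) (hinj : Function.Injective incl)
    (hinf : LinearMap.range incl ⊓ (match n with | 0 => ⊥ | j + 1 => Ufil j) = ⊥)
    (hsup : LinearMap.range incl ⊔ (match n with | 0 => ⊥ | j + 1 => Ufil j) = Ufil n) :
    -- the kernel of `ψ_n` on `F_K^n` is exactly `F_K^{n+1}` …
    (∀ f : Module.Dual k U, f ∈ FKgen Ufil n →
      ((f ∘ₗ incl : Module.Dual k S) = 0 ↔ f ∈ FKgen Ufil (n + 1))) ∧
    -- … and `ψ_n : F_K^n → S_n(p⁻)*` is surjective.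
    (∀ g : Module.Dual k S, ∃ f ∈ FKgen Ufil n, (f ∘ₗ incl : Module.Dual k S) = g) := by
  obtain ⟨V, hFK, hinf, hsup⟩ : ∃ V : Submodule k U, FKgen Ufil n = V.dualAnnihilator ∧
      LinearMap.range incl ⊓ V = ⊥ ∧ LinearMap.range incl ⊔ V = Ufil n := by
    cases n <;> exact ⟨_, rfl, hinf, hsup⟩
  have hFK_succ : FKgen Ufil (n + 1) = (Ufil n).dualAnnihilator := rfl
  refine ⟨fun f hf => ?_, fun g => ?_⟩
  · rw [hFK_succ, ← hsup]
    exact comp_eq_zero_iff_mem_dualAnnihilator_sup (hFK ▸ hf) incl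
  · rw [hFK]
    exact exists_mem_dualAnnihilator_comp_eq hinj (disjoint_iff.mpr hinf) g

end Stmt13
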